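/- The strategy induced by an affine-stable map satisfies receptivity and innocence: with F := { x ∥ y : y ⊑_B f(x) } the stable family of an affine-stable map f from A to B, the map max : Pr(F) → A⊥ ∥ B is a strategy; i.e. it is receptive (any extension of the image by Opponent moves lifts uniquely) and innocent (the only immediate causal dependencies added beyond those of A⊥ ∥ B have an Opponent move preceding a Player move). -/

import Mathlib

universe u v w

/-- An event structure `(E, ≤, Con)`. -/
structure ES (E : Type u) where
  le : E → E → Prop
  le_refl : ∀ e, le e e
  le_trans : ∀ {a b c}, le a b → le b c → le a c
  le_antisymm : ∀ {a b}, le a b → le b a → a = b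
  finitary : ∀ e, Set.Finite {e' | le e' e}
  Con : Set E → Prop
  con_finite : ∀ {X}, Con X → X.Finite
  con_empty : Con ∅
  con_singleton : ∀ e, Con {e}
  con_mono : ∀ {X Y : Set E}, Y ⊆ X → Con X → Con Y
  con_extend : ∀ {X : Set E} {e e'}, Con X → le e e' → e' ∈ X → Con (insert e X)

namespace ES

variable {E : Type u}

/-- A configuration: consistent and down-closed. -/
def Config (S : ES E) (x : Set E) : Prop :=
  (∀ X : Set E, X ⊆ x → X.Finite → S.Con X) ∧
  ∀ ⦃e e' : E⦄, S.le e' e → e ∈ x → e' ∈ x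

/-- The down-closure `[e]` of an event. -/
def downCl (S : ES E) (e : E) : Set E := {e' | S.le e' e}

/-- The concurrency relation. -/
def Co (S : ES E) (e e' : E) : Prop :=
  S.Con {e, e'} ∧ ¬ S.le e e' ∧ ¬ S.le e' e

end ES

/-- The covering (immediate dependency) relation of an order. -/
def Covers {α : Type u} (le : α → α → Prop) (a b : α) : Prop :=
  a ≠ b ∧ le a b ∧ ∀ c, le a c → le c b → c = a ∨ c = b

/-- An event structure with polarity (`true` = Player `+`, `false` = Opponent `−`). -/
structure Game (E : Type u) extends ES E where
  pol : E → Bool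

namespace Game

variable {E : Type u} {E' : Type v}

def Config (G : Game E) : Set E → Prop := G.toES.Config

/-- The dual game: polarities reversed. -/
def dual (G : Game E) : Game E := { toES := G.toES, pol := fun e => !G.pol e }

/-- The Scott order: `y ⊑ x` iff `y⁻ ⊇ x⁻` and `y⁺ ⊆ x⁺`. -/
def ScottLE (G : Game E) (y x : Set E) : Prop :=
  {e | e ∈ x ∧ G.pol e = false} ⊆ {e | e ∈ y ∧ G.pol e = false} ∧
  {e | e ∈ y ∧ G.pol e = true} ⊆ {e | e ∈ x ∧ G.pol e = true}

/-- `x ⊆⁻ y` : inclusion with only Opponent events intervening. -/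
def subNeg (G : Game E) (x y : Set E) : Prop :=
  x ⊆ y ∧ ∀ e ∈ y, e ∉ x → G.pol e = false

/-- `x ⊆⁺ y` : inclusion with only Player events intervening. -/
def subPos (G : Game E) (x y : Set E) : Prop :=
  x ⊆ y ∧ ∀ e ∈ y, e ∉ x → G.pol e = true

/-- Race-freeness of a game. -/
def RaceFree (G : Game E) : Prop :=
  ∀ x y z, G.Config x → G.Config y → G.Config z →
    G.subNeg x y → G.subPos x z → G.Config (y ∪ z)

end Game

section StableFamilies

variable {E : Type u}

/-- A subset of a family is compatible when some member of the family bounds it. -/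
def FamCompatible (F : Set (Set E)) (Z : Set (Set E)) : Prop :=
  ∃ u ∈ F, ∀ z ∈ Z, z ⊆ u

/-- Stable families: complete, stable, finitary and coincidence-free. -/
def IsStableFamily (F : Set (Set E)) : Prop :=
  F.Nonempty ∧
  (∀ Z ⊆ F, (∀ W ⊆ Z, W.Finite → FamCompatible F W) → ⋃₀ Z ∈ F) ∧
  (∀ Z ⊆ F, Z.Nonempty → FamCompatible F Z → ⋂₀ Z ∈ F) ∧
  (∀ x ∈ F, ∀ e ∈ x, ∃ x₀ ∈ F, x₀.Finite ∧ e ∈ x₀ ∧ x₀ ⊆ x) ∧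
  (∀ x ∈ F, ∀ e ∈ x, ∀ e' ∈ x, e ≠ e' →
    ∃ x₀ ∈ F, x₀ ⊆ x ∧ (e ∈ x₀ ↔ e' ∉ x₀))

/-- The prime configuration `[e]_x` of `e` in `x`. -/
def primeConfig (F : Set (Set E)) (e : E) (x : Set E) : Set E :=
  ⋂₀ {y | y ∈ F ∧ e ∈ y ∧ y ⊆ x}

/-- The primes of a family. -/
def IsPrime (F : Set (Set E)) (p : Set E) : Prop :=
  ∃ e x, x ∈ F ∧ e ∈ x ∧ p = primeConfig F e x

end StableFamilies

section Par

variable {E : Type u} {E' : Type v}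

/-- Configurations of a parallel composition `A ∥ B` (componentwise). -/
def parConfig (A : Game E) (B : Game E') (w : Set (E ⊕ E')) : Prop :=
  A.Config (Sum.inl ⁻¹' w) ∧ B.Config (Sum.inr ⁻¹' w)

/-- Causal dependency of `A ∥ B` (componentwise). -/
def parLE (A : Game E) (B : Game E') : (E ⊕ E') → (E ⊕ E') → Prop :=
  Sum.LiftRel A.le B.le

/-- Polarity of `A⊥ ∥ B`. -/
def parPolL (A : Game E) (B : Game E') : E ⊕ E' → Bool
  | .inl a => !A.pol a
  | .inr b => B.pol b

end Par


section AffineStable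

variable {E : Type u} {E' : Type v} {E'' : Type w}

/-- Affine-stable maps between games. -/
def IsAffineStable (A : Game E) (B : Game E') (f : Set E → Set E') : Prop :=
  (∀ x, A.Config x → B.Config (f x)) ∧
  (∀ x y, A.Config x → A.Config y → A.subNeg x y → B.subNeg (f x) (f y)) ∧
  (∀ x y, A.Config x → A.Config y → A.subPos x y → B.subPos (f x) (f y)) ∧
  (∀ x, A.Config x → ∀ b ∈ f x, B.pol b = true →
    ∃ x₀, A.Config x₀ ∧ x₀.Finite ∧ x₀ ⊆ x ∧ b ∈ f x₀) ∧
  (∀ x, A.Config x → x.Finite → {b | b ∈ f x ∧ B.pol b = false}.Finite) ∧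
  (∀ I : Set (Set E), (∀ x ∈ I, A.Config x) →
    (∃ u, A.Config u ∧ ∀ x ∈ I, x ⊆ u) →
    B.subPos (⋃₀ (f '' I)) (f (⋃₀ I))) ∧
  (∀ I : Set (Set E), I.Nonempty → (∀ x ∈ I, A.Config x) →
    (∃ u, A.Config u ∧ ∀ x ∈ I, x ⊆ u) →
    B.subNeg (f (⋂₀ I)) (⋂₀ (f '' I)))

/-- The stable family `{ x ∥ y : y ⊑_B f(x) }` of an affine-stable map. -/
def affFamily (A : Game E) (B : Game E') (f : Set E → Set E') :
    Set (Set (E ⊕ E')) :=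
  {w | ∃ x y, A.Config x ∧ B.Config y ∧ B.ScottLE y (f x) ∧
    w = Sum.inl '' x ∪ Sum.inr '' y}

end AffineStable

section Primes

variable {X : Type u}

/-- Configurations of the event structure of primes `Pr(F)`. -/
def PrConfig (F : Set (Set X)) (y : Set {p : Set X // IsPrime F p}) : Prop :=
  (∀ p ∈ y, ∀ q : {p : Set X // IsPrime F p}, q.1 ⊆ p.1 → q ∈ y) ∧
  (∀ Z ⊆ y, Z.Finite → ⋃₀ (Subtype.val '' Z) ∈ F)

/-- Consistency in `Pr(F)`. -/
def PrCon (F : Set (Set X)) (Z : Set {p : Set X // IsPrime F p}) : Prop :=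
  Z.Finite ∧ ⋃₀ (Subtype.val '' Z) ∈ F

end Primes

/-! The family `F = {x ∥ y : y ⊑ f x}` is closed under compatible unions and bounded
intersections: `f` preserves them only up to `⊆⁺` and `⊆⁻`, which is exactly what the Scott
order `⊑` absorbs. So the primes `[e]_x` are members of `F`, and a prime `p` with top `e` lies
inside the member made of a left part `x` of `p` and the right events of `p` below `e` or below a
negative event of `f x`. Choosing `x` well shows that each prime has a unique top: a second top
forces the left part to be finite and nonempty, and removing a maximal left event (negative: `f`
keeps its positive events; positive: `f` keeps its negative ones) contradicts primality.

With unique tops, `max` inverts `e ↦ [e]_z` on every member `z`; this gives local injectivity,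
and receptivity once the extension `z` is seen to be in `F`. For innocence, if `p ⋖ p'` then
`p' \ {max p, max p'}` is in `F`, and unless `max p ≤ max p'` the polarity condition puts
`p' \ {max p}` in `F` as well, contradicting primality of `p'`. -/

open Set

namespace ES

variable {E : Type u} (S : ES E) {x u : Set E}

theorem config_of_bounded (hdown : ∀ ⦃e e' : E⦄, S.le e' e → e ∈ x → e' ∈ x)
    (hbound : ∀ X ⊆ x, X.Finite → ∃ c, S.Config c ∧ X ⊆ c) : S.Config x := by
  refine ⟨fun X hX hXf => ?_, hdown⟩
  obtain ⟨c, hc, hXc⟩ := hbound X hX hXf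
  exact hc.1 X hXc hXf

theorem config_of_subset (hu : S.Config u) (hxu : x ⊆ u)
    (hdown : ∀ ⦃e e' : E⦄, S.le e' e → e ∈ x → e' ∈ x) : S.Config x :=
  ⟨fun X hX hXf => hu.1 X (hX.trans hxu) hXf, hdown⟩

theorem config_downCl (hu : S.Config u) {e : E} (he : e ∈ u) : S.Config (S.downCl e) :=
  S.config_of_subset hu (fun _ h => hu.2 h he) fun _ _ h h' => S.le_trans h h'

theorem config_diff_singleton (hu : S.Config u) {a : E} (ha : ∀ c ∈ u, S.le a c → c = a) :
    S.Config (u \ {a}) :=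
  S.config_of_subset hu sdiff_subset fun c _ hle ⟨hc, hca⟩ =>
    ⟨hu.2 hle hc, by rintro rfl; exact hca (ha c hc hle)⟩

theorem exists_maximal (hx : x.Finite) (hne : x.Nonempty) :
    ∃ a ∈ x, ∀ c ∈ x, S.le a c → c = a := by
  let _ : LE E := ⟨S.le⟩
  have : IsTrans E (· ≤ ·) := ⟨fun _ _ _ => S.le_trans⟩
  obtain ⟨a, ha, hmax⟩ := hx.exists_maximal hne
  exact ⟨a, ha, fun c hc hac => S.le_antisymm (hmax hc hac) hac⟩

end ES

namespace Game

variable {E : Type u} (G : Game E) {a : E}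

theorem scottLE_iff {y x : Set E} :
    G.ScottLE y x ↔
      (∀ b ∈ x, G.pol b = false → b ∈ y) ∧ (∀ b ∈ y, G.pol b = true → b ∈ x) := by
  simp only [ScottLE, ofPred_subset_ofPred]
  grind

theorem subNeg_diff_singleton (x : Set E) (ha : G.pol a = false) : G.subNeg (x \ {a}) x :=
  ⟨sdiff_subset, fun c hc hcn => by rwa [show c = a from by_contra fun h => hcn ⟨hc, h⟩]⟩

theorem subPos_diff_singleton (x : Set E) (ha : G.pol a = true) : G.subPos (x \ {a}) x :=
  ⟨sdiff_subset, fun c hc hcn => by rwa [show c = a from by_contra fun h => hcn ⟨hc, h⟩]⟩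

end Game

section Par

variable {E : Type u} {E' : Type v} {A : Game E} {B : Game E'} {w u : Set (E ⊕ E')}

theorem parConfig.mem_of_parLE (hw : parConfig A B w) {e e' : E ⊕ E'} (h : parLE A B e' e)
    (he : e ∈ w) : e' ∈ w := by
  cases h with
  | inl h => exact hw.1.2 h he
  | inr h => exact hw.2.2 h he

theorem parConfig_of_bounded (hdown : ∀ ⦃e e'⦄, parLE A B e' e → e ∈ w → e' ∈ w)
    (hbound : ∀ T ⊆ w, T.Finite → ∃ u, parConfig A B u ∧ T ⊆ u) : parConfig A B w := by
  refine ⟨A.toES.config_of_bounded (fun _ _ h ha => hdown (.inl h) ha) fun X hX hXf => ?_,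
    B.toES.config_of_bounded (fun _ _ h hb => hdown (.inr h) hb) fun X hX hXf => ?_⟩
  · obtain ⟨u, hu, hXu⟩ := hbound _ (image_subset_iff.2 hX) (hXf.image Sum.inl)
    exact ⟨_, hu.1, image_subset_iff.1 hXu⟩
  · obtain ⟨u, hu, hXu⟩ := hbound _ (image_subset_iff.2 hX) (hXf.image Sum.inr)
    exact ⟨_, hu.2, image_subset_iff.1 hXu⟩

theorem parConfig_of_subset (hu : parConfig A B u) (hwu : w ⊆ u)
    (hdown : ∀ ⦃e e'⦄, parLE A B e' e → e ∈ w → e' ∈ w) : parConfig A B w :=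
  parConfig_of_bounded hdown fun _ hT _ => ⟨u, hu, hT.trans hwu⟩

theorem subNeg_preimage_inl (huw : u ⊆ w)
    (h : ∀ a, Sum.inl a ∈ w → Sum.inl a ∉ u → parPolL A B (Sum.inl a) = true) :
    A.subNeg (Sum.inl ⁻¹' u) (Sum.inl ⁻¹' w) :=
  ⟨preimage_mono huw, fun a ha hau => by simpa [parPolL] using h a ha hau⟩

theorem subPos_preimage_inl (huw : u ⊆ w)
    (h : ∀ a, Sum.inl a ∈ w → Sum.inl a ∉ u → parPolL A B (Sum.inl a) = false) :
    A.subPos (Sum.inl ⁻¹' u) (Sum.inl ⁻¹' w) :=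
  ⟨preimage_mono huw, fun a ha hau => by simpa [parPolL] using h a ha hau⟩

end Par

section Families

variable {X : Type u} {F : Set (Set X)} {e c : X} {x p q w z : Set X}

def UnionClosed (F : Set (Set X)) : Prop :=
  ∀ Z ⊆ F, (∀ W ⊆ Z, W.Finite → FamCompatible F W) → ⋃₀ Z ∈ F

def InterClosed (F : Set (Set X)) : Prop :=
  ∀ Z ⊆ F, Z.Nonempty → FamCompatible F Z → ⋂₀ Z ∈ F

def UniqueTops (F : Set (Set X)) : Prop :=
  ∀ p ∈ F, ∀ e e', p = primeConfig F e p → p = primeConfig F e' p → e = e'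

theorem exists_superset_of_finite {Z : Set (Set X)}
    (hZ : ∀ W ⊆ Z, W.Finite → FamCompatible F W) {T : Set X} (hT : T.Finite)
    (hTZ : T ⊆ ⋃₀ Z) : ∃ u ∈ F, T ⊆ u := by
  choose! g hgZ hg using fun t (ht : t ∈ T) => mem_sUnion.1 (hTZ ht)
  obtain ⟨u, hu, hgu⟩ := hZ (g '' T) (image_subset_iff.2 hgZ) (hT.image g)
  exact ⟨u, hu, fun t ht => hgu _ (mem_image_of_mem g ht) (hg t ht)⟩

theorem mem_primeConfig (F : Set (Set X)) (e : X) (x : Set X) : e ∈ primeConfig F e x :=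
  fun _ h => h.2.1

theorem mem_of_eq_primeConfig (htop : p = primeConfig F e p) : e ∈ p := by
  rw [htop]
  exact mem_primeConfig F e p

theorem primeConfig_subset_of_mem (hw : w ∈ F) (hew : e ∈ w) (hwx : w ⊆ x) :
    primeConfig F e x ⊆ w :=
  sInter_subset_of_mem ⟨hw, hew, hwx⟩

theorem primeConfig_subset (hx : x ∈ F) (he : e ∈ x) : primeConfig F e x ⊆ x :=
  primeConfig_subset_of_mem hx he subset_rfl

theorem primeConfig_mem (hI : InterClosed F) (hx : x ∈ F) (he : e ∈ x) :
    primeConfig F e x ∈ F :=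
  hI _ (fun _ h => h.1) ⟨x, hx, he, subset_rfl⟩ ⟨x, hx, fun _ h => h.2.2⟩

theorem IsPrime.mem (hI : InterClosed F) (hp : IsPrime F p) : p ∈ F := by
  obtain ⟨e, x, hx, he, rfl⟩ := hp
  exact primeConfig_mem hI hx he

theorem primeConfig_primeConfig (hI : InterClosed F) (hx : x ∈ F) (he : e ∈ x) :
    primeConfig F e (primeConfig F e x) = primeConfig F e x :=
  (primeConfig_subset_of_mem (primeConfig_mem hI hx he) (mem_primeConfig F e x) subset_rfl).antisymm
    (sInter_subset_sInter fun _ hw => ⟨hw.1, hw.2.1, hw.2.2.trans (primeConfig_subset hx he)⟩)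

theorem subset_of_eq_primeConfig (hI : InterClosed F) (htop : p = primeConfig F e p)
    (hp : p ∈ F) (hq : q ∈ F) (hw : w ∈ F) (hpw : p ⊆ w) (hqw : q ⊆ w) (heq : e ∈ q) :
    p ⊆ q := by
  have hpq : p ∩ q ∈ F := by
    simpa using hI {p, q} (by simp [insert_subset_iff, hp, hq]) (insert_nonempty _ _)
      ⟨w, hw, by simp [hpw, hqw]⟩
  calc p = primeConfig F e p := htop
    _ ⊆ p ∩ q :=
      primeConfig_subset_of_mem hpq ⟨mem_of_eq_primeConfig htop, heq⟩ inter_subset_left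
    _ ⊆ q := inter_subset_right

section Tops

variable {m : {p : Set X // IsPrime F p} → X}

theorem top_primeConfig (hI : InterClosed F) (hT : UniqueTops F)
    (hm : ∀ p, p.1 = primeConfig F (m p) p.1) (hx : x ∈ F) (he : e ∈ x) :
    m ⟨primeConfig F e x, e, x, hx, he, rfl⟩ = e :=
  hT _ (primeConfig_mem hI hx he) _ _ (hm ⟨_, e, x, hx, he, rfl⟩)
    (primeConfig_primeConfig hI hx he).symm

theorem eq_of_top_eq (hI : InterClosed F) (hm : ∀ p, p.1 = primeConfig F (m p) p.1)
    {p q : {p : Set X // IsPrime F p}} (hw : w ∈ F) (hpw : p.1 ⊆ w) (hqw : q.1 ⊆ w)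
    (h : m p = m q) : p = q :=
  Subtype.ext <| (subset_of_eq_primeConfig hI (hm p) (p.2.mem hI) (q.2.mem hI) hw hpw hqw
    (h ▸ mem_of_eq_primeConfig (hm q))).antisymm
    (subset_of_eq_primeConfig hI (hm q) (q.2.mem hI) (p.2.mem hI) hw hqw hpw
      (h ▸ mem_of_eq_primeConfig (hm p)))

theorem PrConfig.sUnion_mem (hU : UnionClosed F) (hI : InterClosed F)
    {y : Set {p : Set X // IsPrime F p}} (hy : PrConfig F y) : ⋃₀ (Subtype.val '' y) ∈ F := by
  refine hU _ (by rintro _ ⟨p, -, rfl⟩; exact p.2.mem hI) fun W hW hWf => ?_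
  obtain ⟨Z, hZy, rfl⟩ := subset_image_iff.1 hW
  have hZf : Z.Finite := hWf.of_finite_image Subtype.val_injective.injOn
  exact ⟨_, hy.2 Z hZy hZf, fun _ hz => subset_sUnion_of_mem hz⟩

theorem PrConfig.sUnion_eq_image (hI : InterClosed F) (hT : UniqueTops F)
    (hm : ∀ p, p.1 = primeConfig F (m p) p.1) {y : Set {p : Set X // IsPrime F p}}
    (hy : PrConfig F y) : ⋃₀ (Subtype.val '' y) = m '' y := by
  refine Subset.antisymm ?_ ?_
  · rintro t ⟨_, ⟨p, hp, rfl⟩, htp⟩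
    have hpF := p.2.mem hI
    exact ⟨_, hy.1 p hp _ (primeConfig_subset hpF htp), top_primeConfig hI hT hm hpF htp⟩
  · rintro _ ⟨p, hp, rfl⟩
    exact ⟨p.1, mem_image_of_mem _ hp, mem_of_eq_primeConfig (hm p)⟩

theorem prConfig_setOf_subset (hU : UnionClosed F) (hI : InterClosed F) (hz : z ∈ F) :
    PrConfig F {p | p.1 ⊆ z} := by
  refine ⟨fun p hp q hqp => hqp.trans hp, fun Z hZ _ => ?_⟩
  refine hU _ (by rintro _ ⟨p, -, rfl⟩; exact p.2.mem hI) fun W hW _ => ⟨z, hz, ?_⟩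
  intro w hw
  obtain ⟨p, hp, rfl⟩ := hW hw
  exact hZ hp

theorem image_setOf_subset (hI : InterClosed F) (hT : UniqueTops F)
    (hm : ∀ p, p.1 = primeConfig F (m p) p.1) (hz : z ∈ F) : m '' {p | p.1 ⊆ z} = z := by
  refine Subset.antisymm ?_ fun t ht => ?_
  · rintro _ ⟨p, hp, rfl⟩
    exact hp (mem_of_eq_primeConfig (hm p))
  · exact ⟨_, primeConfig_subset hz ht, top_primeConfig hI hT hm hz ht⟩

theorem existsUnique_prConfig_image_eq (hU : UnionClosed F) (hI : InterClosed F)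
    (hT : UniqueTops F) (hm : ∀ p, p.1 = primeConfig F (m p) p.1)
    {y : Set {p : Set X // IsPrime F p}} (hy : PrConfig F y) (hz : z ∈ F) (hyz : m '' y ⊆ z) :
    ∃! y', PrConfig F y' ∧ y ⊆ y' ∧ m '' y' = z := by
  refine ⟨{p | p.1 ⊆ z}, ⟨prConfig_setOf_subset hU hI hz, fun p hp => ?_,
    image_setOf_subset hI hT hm hz⟩, ?_⟩
  · rw [← hy.sUnion_eq_image hI hT hm] at hyz
    exact (subset_sUnion_of_mem (mem_image_of_mem _ hp)).trans hyz
  rintro y' ⟨hy', -, rfl⟩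
  have hsub : ∀ p ∈ y', p.1 ⊆ m '' y' := fun p hp =>
    hy'.sUnion_eq_image hI hT hm ▸ subset_sUnion_of_mem (mem_image_of_mem _ hp)
  ext p
  refine ⟨hsub p, fun hp => ?_⟩
  obtain ⟨q, hq, hmq⟩ := hp (mem_of_eq_primeConfig (hm p))
  rwa [eq_of_top_eq hI hm hz hp (hsub q hq) hmq.symm]

end Tops

section Covers

variable {m : {p : Set X // IsPrime F p} → X} {p p' : {p : Set X // IsPrime F p}}

theorem top_ne_of_covers (hI : InterClosed F) (hm : ∀ p, p.1 = primeConfig F (m p) p.1)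
    (hcov : Covers (fun p q : {p : Set X // IsPrime F p} => p.1 ⊆ q.1) p p') : m p ≠ m p' :=
  fun h => hcov.1 (eq_of_top_eq hI hm (p'.2.mem hI) hcov.2.1 subset_rfl h)

/-- The prime `[c]_{p'}` lies between `p` and `p'`, so it is one of them. -/
theorem eq_top_or_eq_top_of_covers (hI : InterClosed F) (hT : UniqueTops F)
    (hm : ∀ p, p.1 = primeConfig F (m p) p.1)
    (hcov : Covers (fun p q : {p : Set X // IsPrime F p} => p.1 ⊆ q.1) p p') (hc : c ∈ p'.1)
    (h : m p ∈ primeConfig F c p'.1 ∨ m p' ∈ primeConfig F c p'.1) :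
    c = m p ∨ c = m p' := by
  have hp'F := p'.2.mem hI
  let q : {p : Set X // IsPrime F p} := ⟨_, c, p'.1, hp'F, hc, rfl⟩
  have hqF : q.1 ∈ F := primeConfig_mem hI hp'F hc
  have hqp' : q.1 ⊆ p'.1 := primeConfig_subset hp'F hc
  have hpq : p.1 ⊆ q.1 := by
    rcases h with h | h
    · exact subset_of_eq_primeConfig hI (hm p) (p.2.mem hI) hqF hp'F hcov.2.1 hqp' h
    · exact hcov.2.1.trans (subset_of_eq_primeConfig hI (hm p') hp'F hqF hp'F subset_rfl hqp' h)
  have hmq : m q = c := top_primeConfig hI hT hm hp'F hc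
  rcases hcov.2.2 q hpq hqp' with h | h
  exacts [.inl (by rw [← hmq, h]), .inr (by rw [← hmq, h])]

theorem diff_pair_mem_of_covers (hU : UnionClosed F) (hI : InterClosed F) (hT : UniqueTops F)
    (hm : ∀ p, p.1 = primeConfig F (m p) p.1)
    (hcov : Covers (fun p q : {p : Set X // IsPrime F p} => p.1 ⊆ q.1) p p') :
    p'.1 \ {m p, m p'} ∈ F := by
  have hp'F := p'.2.mem hI
  have hunion : ⋃₀ ((primeConfig F · p'.1) '' (p'.1 \ {m p, m p'})) = p'.1 \ {m p, m p'} := by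
    refine Subset.antisymm ?_ fun c hc =>
      mem_sUnion_of_mem (mem_primeConfig F c p'.1) (mem_image_of_mem _ hc)
    rintro t ⟨_, ⟨c, ⟨hc, hcne⟩, rfl⟩, htc⟩
    refine ⟨primeConfig_subset hp'F hc htc, fun ht => hcne ?_⟩
    rcases ht with rfl | rfl
    exacts [eq_top_or_eq_top_of_covers hI hT hm hcov hc (.inl htc),
      eq_top_or_eq_top_of_covers hI hT hm hcov hc (.inr htc)]
  rw [← hunion]
  refine hU _ (by rintro _ ⟨c, hc, rfl⟩; exact primeConfig_mem hI hp'F hc.1) fun W hW _ => ?_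
  refine ⟨p'.1, hp'F, fun w hw => ?_⟩
  obtain ⟨c, hc, rfl⟩ := hW hw
  exact primeConfig_subset hp'F hc.1

theorem diff_singleton_not_mem_of_covers (hI : InterClosed F)
    (hm : ∀ p, p.1 = primeConfig F (m p) p.1)
    (hcov : Covers (fun p q : {p : Set X // IsPrime F p} => p.1 ⊆ q.1) p p') :
    p'.1 \ {m p} ∉ F := fun h =>
  have hsub := (hm p').trans_subset (primeConfig_subset_of_mem h
    ⟨mem_of_eq_primeConfig (hm p'), (top_ne_of_covers hI hm hcov).symm⟩ sdiff_subset)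
  (hsub (hcov.2.1 (mem_of_eq_primeConfig (hm p)))).2 rfl

end Covers

end Families

section AffineStable

variable {E : Type u} {E' : Type v} {A : Game E} {B : Game E'} {f : Set E → Set E'}

namespace IsAffineStable

variable {x y : Set E} {b : E'}

theorem config (hf : IsAffineStable A B f) (hx : A.Config x) : B.Config (f x) := hf.1 x hx

theorem mem_of_subNeg (hf : IsAffineStable A B f) (hx : A.Config x) (hy : A.Config y)
    (hxy : A.subNeg x y) (hb : b ∈ f y) (hpos : B.pol b = true) : b ∈ f x :=
  by_contra fun h => by simp [(hf.2.1 x y hx hy hxy).2 b hb h] at hpos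

theorem mem_of_subPos (hf : IsAffineStable A B f) (hx : A.Config x) (hy : A.Config y)
    (hxy : A.subPos x y) (hb : b ∈ f y) (hneg : B.pol b = false) : b ∈ f x :=
  by_contra fun h => by simp [(hf.2.2.1 x y hx hy hxy).2 b hb h] at hneg

theorem exists_finite_subset (hf : IsAffineStable A B f) (hx : A.Config x) (hb : b ∈ f x)
    (hpos : B.pol b = true) : ∃ x₀, A.Config x₀ ∧ x₀.Finite ∧ x₀ ⊆ x ∧ b ∈ f x₀ :=
  hf.2.2.2.1 x hx b hb hpos

theorem mono (hf : IsAffineStable A B f) (hx : A.Config x) (hy : A.Config y) (hxy : x ⊆ y) :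
    f x ⊆ f y := by
  have h := (hf.2.2.2.2.2.2 {x, y} (insert_nonempty _ _) (by simp [hx, hy])
    ⟨y, hy, by simp [hxy]⟩).1
  simp only [sInter_pair, inter_eq_left.2 hxy, image_pair] at h
  exact h.trans inter_subset_right

theorem exists_mem_of_mem_sUnion (hf : IsAffineStable A B f) {I : Set (Set E)}
    (hI : ∀ x ∈ I, A.Config x) {u : Set E} (hu : A.Config u) (hIu : ∀ x ∈ I, x ⊆ u)
    (hb : b ∈ f (⋃₀ I)) (hneg : B.pol b = false) :
    ∃ x ∈ I, b ∈ f x := by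
  by_contra h
  have h' : b ∉ ⋃₀ (f '' I) := by simpa using h
  simp [(hf.2.2.2.2.2.1 I hI ⟨u, hu, hIu⟩).2 b hb h'] at hneg

theorem mem_sInter (hf : IsAffineStable A B f) {I : Set (Set E)} (hne : I.Nonempty)
    (hI : ∀ x ∈ I, A.Config x) {u : Set E} (hu : A.Config u) (hIu : ∀ x ∈ I, x ⊆ u)
    (hb : ∀ x ∈ I, b ∈ f x) (hpos : B.pol b = true) :
    b ∈ f (⋂₀ I) :=
  by_contra fun h => by
    simp [(hf.2.2.2.2.2.2 I hne hI ⟨u, hu, hIu⟩).2 b (by simpa using hb) h] at hpos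

theorem pol_eq_true_of_mem_empty (hf : IsAffineStable A B f) (hb : b ∈ f ∅) :
    B.pol b = true := by
  by_contra hneg
  have hempty : A.Config (∅ : Set E) :=
    ⟨fun X hX _ => subset_empty_iff.1 hX ▸ A.con_empty, fun _ _ _ h => h.elim⟩
  obtain ⟨_, h, -⟩ := hf.exists_mem_of_mem_sUnion (I := ∅) (by simp) hempty (by simp)
    (by simpa using hb) (by simpa using hneg)
  exact h

end IsAffineStable

theorem mem_affFamily_iff {w : Set (E ⊕ E')} :
    w ∈ affFamily A B f ↔ parConfig A B w ∧
      (∀ b ∈ f (Sum.inl ⁻¹' w), B.pol b = false → Sum.inr b ∈ w) ∧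
      (∀ b, Sum.inr b ∈ w → B.pol b = true → b ∈ f (Sum.inl ⁻¹' w)) := by
  constructor
  · rintro ⟨x, y, hx, hy, hxy, rfl⟩
    have hL : Sum.inl ⁻¹' (Sum.inl '' x ∪ Sum.inr '' y) = x := by ext; simp
    have hR : Sum.inr ⁻¹' (Sum.inl '' x ∪ Sum.inr '' y) = y := by ext; simp
    rw [parConfig, hL, hR]
    simpa using ⟨⟨hx, hy⟩, B.scottLE_iff.1 hxy⟩
  · rintro ⟨hw, hneg, hpos⟩
    exact ⟨_, _, hw.1, hw.2, B.scottLE_iff.2 ⟨hneg, hpos⟩,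
      (image_preimage_inl_union_image_preimage_inr w).symm⟩

theorem mem_affFamily_of {x : Set E} {y : Set E'} (hx : A.Config x) (hy : B.Config y)
    (hneg : ∀ b ∈ f x, B.pol b = false → b ∈ y)
    (hpos : ∀ b ∈ y, B.pol b = true → b ∈ f x) :
    Sum.inl '' x ∪ Sum.inr '' y ∈ affFamily A B f :=
  ⟨x, y, hx, hy, B.scottLE_iff.2 ⟨hneg, hpos⟩, rfl⟩

theorem affFamily_unionClosed (hf : IsAffineStable A B f) : UnionClosed (affFamily A B f) := by
  intro Z hZ hcomp
  have hmem := fun w (hw : w ∈ Z) => mem_affFamily_iff.1 (hZ hw)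
  have hconf : parConfig A B (⋃₀ Z) := by
    refine parConfig_of_bounded
      (fun e e' h ⟨w, hw, hew⟩ => ⟨w, hw, (hmem w hw).1.mem_of_parLE h hew⟩)
      fun T hT hTf => ?_
    obtain ⟨u, hu, hTu⟩ := exists_superset_of_finite hcomp hTf hT
    exact ⟨u, (mem_affFamily_iff.1 hu).1, hTu⟩
  have hL : Sum.inl ⁻¹' ⋃₀ Z = ⋃₀ ((Sum.inl ⁻¹' ·) '' Z) := by
    rw [preimage_sUnion, sUnion_image]
  have hLsub : ∀ w ∈ Z, Sum.inl ⁻¹' w ⊆ Sum.inl ⁻¹' ⋃₀ Z := fun w hw =>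
    preimage_mono (subset_sUnion_of_mem hw)
  refine mem_affFamily_iff.2 ⟨hconf, fun b hb hneg => ?_, fun b ⟨w, hw, hbw⟩ hpos => ?_⟩
  · rw [hL] at hb
    obtain ⟨_, ⟨w, hw, rfl⟩, hbw⟩ := hf.exists_mem_of_mem_sUnion
      (by rintro _ ⟨w, hw, rfl⟩; exact (hmem w hw).1.1) hconf.1
      (by rintro _ ⟨w, hw, rfl⟩; exact hLsub w hw) hb hneg
    exact ⟨w, hw, (hmem w hw).2.1 b hbw hneg⟩
  · exact hf.mono (hmem w hw).1.1 hconf.1 (hLsub w hw) ((hmem w hw).2.2 b hbw hpos)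

theorem affFamily_interClosed (hf : IsAffineStable A B f) : InterClosed (affFamily A B f) := by
  rintro Z hZ ⟨w₀, hw₀⟩ ⟨u, hu, hZu⟩
  have hmem := fun w (hw : w ∈ Z) => mem_affFamily_iff.1 (hZ hw)
  have hconf : parConfig A B (⋂₀ Z) := parConfig_of_subset (hmem w₀ hw₀).1
    (sInter_subset_of_mem hw₀) fun e e' h he w hw => (hmem w hw).1.mem_of_parLE h (he w hw)
  have hLsub : ∀ w ∈ Z, Sum.inl ⁻¹' ⋂₀ Z ⊆ Sum.inl ⁻¹' w := fun w hw =>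
    preimage_mono (sInter_subset_of_mem hw)
  refine mem_affFamily_iff.2 ⟨hconf, fun b hb hneg w hw => ?_, fun b hb hpos => ?_⟩
  · exact (hmem w hw).2.1 b (hf.mono hconf.1 (hmem w hw).1.1 (hLsub w hw) hb) hneg
  · have hL : Sum.inl ⁻¹' ⋂₀ Z = ⋂₀ ((Sum.inl ⁻¹' ·) '' Z) := by
      rw [preimage_sInter, sInter_image]
    rw [hL]
    refine hf.mem_sInter ⟨_, w₀, hw₀, rfl⟩
      (by rintro _ ⟨w, hw, rfl⟩; exact (hmem w hw).1.1)
      (mem_affFamily_iff.1 hu).1.1 (by rintro _ ⟨w, hw, rfl⟩; exact preimage_mono (hZu w hw))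
      (by rintro _ ⟨w, hw, rfl⟩; exact (hmem w hw).2.2 b (hb w hw) hpos) hpos

section Tops

variable {p : Set (E ⊕ E')} {e : E ⊕ E'}

/-- The right-hand side is a member of the family containing `e` and contained in `p`, so it
contains the prime `p`. -/
theorem subset_of_eq_primeConfig_affFamily (hf : IsAffineStable A B f)
    (hp : p ∈ affFamily A B f) (htop : p = primeConfig (affFamily A B f) e p) {x : Set E}
    (hx : A.Config x) (hxp : x ⊆ Sum.inl ⁻¹' p) (hex : ∀ a, e = Sum.inl a → a ∈ x)
    (hpos : ∀ b, e = Sum.inr b →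
      ∀ c, Sum.inr c ∈ p → B.le c b → B.pol c = true → c ∈ f x) :
    p ⊆ Sum.inl '' x ∪ Sum.inr '' {c | Sum.inr c ∈ p ∧
      ∃ d, (d ∈ f x ∧ B.pol d = false ∨ Sum.inr d = e) ∧ B.le c d} := by
  obtain ⟨hpc, hpneg, -⟩ := mem_affFamily_iff.1 hp
  refine htop.trans_subset (primeConfig_subset_of_mem (mem_affFamily_of hx ?_ ?_ ?_) ?_ ?_)
  · refine B.toES.config_of_subset hpc.2 (fun c hc => hc.1) ?_
    rintro c c' hle ⟨hc, d, hd, hcd⟩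
    exact ⟨hpc.2.2 hle hc, d, hd, B.le_trans hle hcd⟩
  · exact fun b hb hneg =>
      ⟨hpneg b (hf.mono hx hpc.1 hxp hb) hneg, b, .inl ⟨hb, hneg⟩, B.le_refl b⟩
  · rintro c ⟨hc, d, hd | hd, hcd⟩ hcpos
    · exact (hf.config hx).2 hcd hd.1
    · exact hpos d hd.symm c hc hcd hcpos
  · have he := mem_of_eq_primeConfig htop
    rcases e with a | b
    · exact .inl (mem_image_of_mem _ (hex a rfl))
    · exact .inr ⟨b, ⟨he, b, .inr rfl, B.le_refl b⟩, rfl⟩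
  · exact union_subset (image_subset_iff.2 hxp) (image_subset_iff.2 fun c hc => hc.1)

theorem preimage_inl_subset_of_eq_primeConfig (hf : IsAffineStable A B f)
    (hp : p ∈ affFamily A B f) (htop : p = primeConfig (affFamily A B f) e p) {x : Set E}
    (hx : A.Config x) (hxp : x ⊆ Sum.inl ⁻¹' p) (hex : ∀ a, e = Sum.inl a → a ∈ x)
    (hpos : ∀ b, e = Sum.inr b →
      ∀ c, Sum.inr c ∈ p → B.le c b → B.pol c = true → c ∈ f x) :
    Sum.inl ⁻¹' p ⊆ x := fun a ha => by
  simpa using subset_of_eq_primeConfig_affFamily hf hp htop hx hxp hex hpos ha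

theorem exists_le_of_eq_primeConfig (hf : IsAffineStable A B f) (hp : p ∈ affFamily A B f)
    (htop : p = primeConfig (affFamily A B f) e p) {c : E'} (hc : Sum.inr c ∈ p) :
    ∃ d, (d ∈ f (Sum.inl ⁻¹' p) ∧ B.pol d = false ∨ Sum.inr d = e) ∧ B.le c d := by
  obtain ⟨hpc, -, hppos⟩ := mem_affFamily_iff.1 hp
  have h := subset_of_eq_primeConfig_affFamily hf hp htop hpc.1 subset_rfl
    (fun _ h => mem_preimage.2 (h ▸ mem_of_eq_primeConfig htop))
    (fun _ _ c hc _ hcpos => hppos c hc hcpos) hc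
  simpa [hc] using h

theorem le_of_eq_primeConfig_inl (hf : IsAffineStable A B f) (hp : p ∈ affFamily A B f) {a : E}
    (htop : p = primeConfig (affFamily A B f) (Sum.inl a) p) {a' : E} (ha' : Sum.inl a' ∈ p) :
    A.le a' a := by
  have hpc := (mem_affFamily_iff.1 hp).1
  have ha : Sum.inl a ∈ p := mem_of_eq_primeConfig htop
  exact preimage_inl_subset_of_eq_primeConfig hf hp htop (A.toES.config_downCl hpc.1 ha)
    (fun _ h => hpc.1.2 h ha) (fun _ h => Sum.inl_injective h ▸ A.le_refl a)
    (fun _ h => by cases h) ha'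

/-- Removing a maximal left event `a` preserves the positive events of `f` below `b`: if `a` is
negative this is the `⊆⁻`-monotonicity of `f`, and if `a` is positive, `d` survives. -/
theorem false_of_eq_primeConfig_inr_of_maximal (hf : IsAffineStable A B f)
    (hp : p ∈ affFamily A B f) {b : E'} (htop : p = primeConfig (affFamily A B f) (Sum.inr b) p)
    {a : E} (ha : Sum.inl a ∈ p) (hmax : ∀ c ∈ Sum.inl ⁻¹' p, A.le a c → c = a) {d : E'}
    (hd : d ∈ f (Sum.inl ⁻¹' p)) (hdneg : B.pol d = false) (hbd : B.le b d) : False := by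
  obtain ⟨hpc, -, hppos⟩ := mem_affFamily_iff.1 hp
  have hx : A.Config (Sum.inl ⁻¹' p \ {a}) := A.toES.config_diff_singleton hpc.1 hmax
  have hpos : ∀ c, Sum.inr c ∈ p → B.le c b → B.pol c = true →
      c ∈ f (Sum.inl ⁻¹' p \ {a}) := by
    intro c hc hcb hcpos
    cases hpol : A.pol a
    · exact hf.mem_of_subNeg hx hpc.1 (A.subNeg_diff_singleton _ hpol) (hppos c hc hcpos) hcpos
    · exact (hf.config hx).2 (B.le_trans hcb hbd)
        (hf.mem_of_subPos hx hpc.1 (A.subPos_diff_singleton _ hpol) hd hdneg)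
  have h := preimage_inl_subset_of_eq_primeConfig hf hp htop hx sdiff_subset
    (fun _ h => by cases h) (fun _ h => by cases h; exact hpos) ha
  exact h.2 rfl

theorem finite_preimage_inl_of_eq_primeConfig_inr (hf : IsAffineStable A B f)
    (hp : p ∈ affFamily A B f) {b : E'} (htop : p = primeConfig (affFamily A B f) (Sum.inr b) p) :
    (Sum.inl ⁻¹' p).Finite := by
  obtain ⟨hpc, -, hppos⟩ := mem_affFamily_iff.1 hp
  set P := {c | Sum.inr c ∈ p ∧ B.le c b ∧ B.pol c = true}
  have hP : P.Finite := (B.finitary b).subset fun c hc => hc.2.1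
  choose! s hs hsfin hsp hcs using fun c (hc : c ∈ P) =>
    hf.exists_finite_subset hpc.1 (hppos c hc.1 hc.2.2) hc.2.2
  have hsp' : (⋃ c ∈ P, s c) ⊆ Sum.inl ⁻¹' p := iUnion₂_subset hsp
  have hx : A.Config (⋃ c ∈ P, s c) := by
    refine A.toES.config_of_subset hpc.1 hsp' fun a a' h ha => ?_
    obtain ⟨c, hc, hac⟩ := mem_iUnion₂.1 ha
    exact mem_iUnion₂.2 ⟨c, hc, (hs c hc).2 h hac⟩
  refine (hP.biUnion hsfin).subset (preimage_inl_subset_of_eq_primeConfig hf hp htop hx hsp'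
    (fun _ h => by cases h) ?_)
  rintro _ h c hc hcb hcpos
  cases h
  exact hf.mono (hs c ⟨hc, hcb, hcpos⟩) hx (subset_biUnion_of_mem (u := s) ⟨hc, hcb, hcpos⟩)
    (hcs c ⟨hc, hcb, hcpos⟩)

theorem false_of_eq_primeConfig_inl_inr (hf : IsAffineStable A B f) (hp : p ∈ affFamily A B f)
    {a : E} {b : E'} (htop : p = primeConfig (affFamily A B f) (Sum.inl a) p)
    (htop' : p = primeConfig (affFamily A B f) (Sum.inr b) p) : False := by
  obtain ⟨d, hd | hd, hbd⟩ :=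
    exists_le_of_eq_primeConfig hf hp htop (mem_of_eq_primeConfig htop')
  · exact false_of_eq_primeConfig_inr_of_maximal hf hp htop' (mem_of_eq_primeConfig htop)
      (fun c hc hac => A.le_antisymm (le_of_eq_primeConfig_inl hf hp htop hc) hac) hd.1 hd.2 hbd
  · cases hd

/-- Each of `b`, `b'` is below the other or below a negative event of `f` on the left part, so
`b` is below such an event; then the left part is nonempty (`f ∅` is positive), finite (finite
support of the positive events below `b`), and removing a maximal event contradicts primality. -/
theorem eq_of_eq_primeConfig_inr (hf : IsAffineStable A B f) (hp : p ∈ affFamily A B f)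
    {b b' : E'} (htop : p = primeConfig (affFamily A B f) (Sum.inr b) p)
    (htop' : p = primeConfig (affFamily A B f) (Sum.inr b') p) : b = b' := by
  by_contra hne
  obtain ⟨d, hd, hdneg, hbd⟩ :
      ∃ d ∈ f (Sum.inl ⁻¹' p), B.pol d = false ∧ B.le b d := by
    obtain ⟨d, hd | hd, hbd⟩ :=
      exists_le_of_eq_primeConfig hf hp htop' (mem_of_eq_primeConfig htop)
    · exact ⟨d, hd.1, hd.2, hbd⟩
    cases hd
    obtain ⟨d', hd' | hd', hbd'⟩ :=
      exists_le_of_eq_primeConfig hf hp htop (mem_of_eq_primeConfig htop')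
    · exact ⟨d', hd'.1, hd'.2, B.le_trans hbd hbd'⟩
    cases hd'
    exact (hne (B.le_antisymm hbd hbd')).elim
  have hne : (Sum.inl ⁻¹' p).Nonempty := nonempty_iff_ne_empty.2 fun h => by
    rw [h] at hd
    simp [hf.pol_eq_true_of_mem_empty hd] at hdneg
  obtain ⟨a, ha, hmax⟩ :=
    A.toES.exists_maximal (finite_preimage_inl_of_eq_primeConfig_inr hf hp htop) hne
  exact false_of_eq_primeConfig_inr_of_maximal hf hp htop ha hmax hd hdneg hbd

theorem affFamily_uniqueTops (hf : IsAffineStable A B f) : UniqueTops (affFamily A B f) := by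
  rintro p hp (a | b) (a' | b') htop htop'
  · exact congrArg _ (A.le_antisymm
      (le_of_eq_primeConfig_inl hf hp htop' (mem_of_eq_primeConfig htop))
      (le_of_eq_primeConfig_inl hf hp htop (mem_of_eq_primeConfig htop')))
  · exact (false_of_eq_primeConfig_inl_inr hf hp htop htop').elim
  · exact (false_of_eq_primeConfig_inl_inr hf hp htop' htop).elim
  · exact congrArg _ (eq_of_eq_primeConfig_inr hf hp htop htop')

end Tops

theorem mem_affFamily_of_subset (hf : IsAffineStable A B f) {w z : Set (E ⊕ E')}
    (hw : w ∈ affFamily A B f) (hz : parConfig A B z) (hwz : w ⊆ z)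
    (hneg : ∀ e ∈ z, e ∉ w → parPolL A B e = false) : z ∈ affFamily A B f := by
  obtain ⟨hwc, hwneg, hwpos⟩ := mem_affFamily_iff.1 hw
  have hsub := subPos_preimage_inl (A := A) (B := B) hwz fun a ha haw => hneg _ ha haw
  refine mem_affFamily_iff.2 ⟨hz, fun b hb hbneg => ?_, fun b hb hbpos => ?_⟩
  · exact hwz (hwneg b (hf.mem_of_subPos hwc.1 hz.1 hsub hb hbneg) hbneg)
  · have hbw : Sum.inr b ∈ w := by_contra fun h => by simpa [parPolL, hbpos] using hneg _ hb h
    exact hf.mono hwc.1 hz.1 hsub.1 (hwpos b hbw hbpos)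

/-- Since `w \ {e, e'}` is down-closed, `e'` is the only event of `w` that could lie above `e`;
the polarity condition makes `f` keep the Scott order when `e` is removed. -/
theorem diff_singleton_mem_affFamily (hf : IsAffineStable A B f) {w : Set (E ⊕ E')}
    {e e' : E ⊕ E'} (hw : w ∈ affFamily A B f) (hu : w \ {e, e'} ∈ affFamily A B f)
    (hpol : parPolL A B e = true ∨ parPolL A B e' = false) (hle : ¬ parLE A B e e') :
    w \ {e} ∈ affFamily A B f := by
  obtain ⟨hwc, hwneg, hwpos⟩ := mem_affFamily_iff.1 hw
  obtain ⟨huc, huneg, hupos⟩ := mem_affFamily_iff.1 hu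
  have hconf : parConfig A B (w \ {e}) := by
    refine parConfig_of_subset hwc sdiff_subset fun c c' h ⟨hc, hce⟩ =>
      ⟨hwc.mem_of_parLE h hc, ?_⟩
    rintro rfl
    by_cases hce' : c = e'
    · exact hle (hce' ▸ h)
    · exact (huc.mem_of_parLE h ⟨hc, by simp_all⟩).2 (.inl rfl)
  have hLu : Sum.inl ⁻¹' (w \ {e, e'}) ⊆ Sum.inl ⁻¹' (w \ {e}) :=
    preimage_mono (sdiff_subset_sdiff_right (by simp))
  refine mem_affFamily_iff.2 ⟨hconf, fun b hb hbneg => ?_, fun b hb hbpos => ?_⟩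
  · refine ⟨hwneg b (hf.mono hconf.1 hwc.1 (preimage_mono sdiff_subset) hb) hbneg, ?_⟩
    rintro rfl
    have hpol' : parPolL A B e' = false := hpol.resolve_left (by simpa [parPolL] using hbneg)
    have hsub : A.subPos (Sum.inl ⁻¹' (w \ {Sum.inr b, e'})) (Sum.inl ⁻¹' w) :=
      subPos_preimage_inl sdiff_subset fun a ha hau => by
        obtain rfl : Sum.inl a = e' := by simpa [ha] using hau
        exact hpol'
    have hbu := hf.mem_of_subPos huc.1 hwc.1 hsub
      (hf.mono hconf.1 hwc.1 (preimage_mono sdiff_subset) hb) hbneg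
    exact (huneg b hbu hbneg).2 (.inl rfl)
  · by_cases hbe' : Sum.inr b = e'
    · subst hbe'
      have hpol' : parPolL A B e = true := hpol.resolve_right (by simp [parPolL, hbpos])
      have hsub : A.subNeg (Sum.inl ⁻¹' (w \ {e})) (Sum.inl ⁻¹' w) :=
        subNeg_preimage_inl sdiff_subset fun a ha hau => by
          obtain rfl : Sum.inl a = e := by simpa [ha] using hau
          exact hpol'
      exact hf.mem_of_subNeg hconf.1 hwc.1 hsub (hwpos b hb.1 hbpos) hbpos
    · exact hf.mono huc.1 hconf.1 hLu (hupos b ⟨hb.1, by simp_all⟩ hbpos)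

theorem parLE_covers_of_covers (hf : IsAffineStable A B f)
    {m : {p : Set (E ⊕ E') // IsPrime (affFamily A B f) p} → E ⊕ E'}
    (hm : ∀ p, p.1 = primeConfig (affFamily A B f) (m p) p.1)
    {p p' : {p : Set (E ⊕ E') // IsPrime (affFamily A B f) p}}
    (hcov : Covers
      (fun p q : {p : Set (E ⊕ E') // IsPrime (affFamily A B f) p} => p.1 ⊆ q.1) p p')
    (hpol : parPolL A B (m p) = true ∨ parPolL A B (m p') = false) :
    Covers (parLE A B) (m p) (m p') := by
  have hI := affFamily_interClosed hf
  have hT := affFamily_uniqueTops hf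
  have hp'c := (mem_affFamily_iff.1 (p'.2.mem hI)).1
  have hne := top_ne_of_covers hI hm hcov
  have hle : parLE A B (m p) (m p') := by_contra fun h =>
    diff_singleton_not_mem_of_covers hI hm hcov <| diff_singleton_mem_affFamily hf (p'.2.mem hI)
      (diff_pair_mem_of_covers (affFamily_unionClosed hf) hI hT hm hcov)
      hpol h
  refine ⟨hne, hle, fun c h₁ h₂ => ?_⟩
  refine eq_top_or_eq_top_of_covers hI hT hm hcov
    (hp'c.mem_of_parLE h₂ (mem_of_eq_primeConfig (hm p'))) (.inl (mem_sInter.2 fun w hw => ?_))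
  exact (mem_affFamily_iff.1 hw.1).1.mem_of_parLE h₁ hw.2.1

end AffineStable

/-- `max : Pr(F) → A⊥ ∥ B` is a strategy: a locally injective total map of
event structures which is receptive and innocent. -/
theorem stmt11 {E : Type u} {E' : Type v} (A : Game E) (B : Game E')
    (f : Set E → Set E') (hf : IsAffineStable A B f)
    (m : {p : Set (E ⊕ E') // IsPrime (affFamily A B f) p} → E ⊕ E')
    (hm : ∀ p, m p ∈ p.1 ∧ p.1 = primeConfig (affFamily A B f) (m p) p.1) :
    (∀ y, PrConfig (affFamily A B f) y → parConfig A B (m '' y)) ∧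
    (∀ y, PrConfig (affFamily A B f) y →
      ∀ p ∈ y, ∀ q ∈ y, m p = m q → p = q) ∧
    (∀ y, PrConfig (affFamily A B f) y → ∀ z, parConfig A B z → m '' y ⊆ z →
      (∀ e ∈ z, e ∉ m '' y → parPolL A B e = false) →
      ∃! y', PrConfig (affFamily A B f) y' ∧ y ⊆ y' ∧ m '' y' = z) ∧
    (∀ p p', Covers
        (fun p q : {p : Set (E ⊕ E') // IsPrime (affFamily A B f) p} => p.1 ⊆ q.1)
        p p' →
      (parPolL A B (m p) = true ∨ parPolL A B (m p') = false) →
      Covers (parLE A B) (m p) (m p')) := by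
  have hU := affFamily_unionClosed hf
  have hI := affFamily_interClosed hf
  have hT := affFamily_uniqueTops hf
  have htop : ∀ p, p.1 = primeConfig (affFamily A B f) (m p) p.1 := fun p => (hm p).2
  refine ⟨fun y hy => ?_, fun y hy p hp q hq h => ?_, fun y hy z hz hyz hneg => ?_,
    fun p p' hcov hpol => parLE_covers_of_covers hf htop hcov hpol⟩
  · rw [← hy.sUnion_eq_image hI hT htop]
    exact (mem_affFamily_iff.1 (hy.sUnion_mem hU hI)).1
  · exact eq_of_top_eq hI htop (hy.sUnion_mem hU hI) (subset_sUnion_of_mem (mem_image_of_mem _ hp))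
      (subset_sUnion_of_mem (mem_image_of_mem _ hq)) h
  · refine existsUnique_prConfig_image_eq hU hI hT htop hy ?_ hyz
    rw [← hy.sUnion_eq_image hI hT htop] at hyz hneg
    exact mem_affFamily_of_subset hf (hy.sUnion_mem hU hI) hz hyz hneg
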